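/- arXiv:1102.2960 — 2 statements merged into one kernel-verified Lean document; each statement's English description precedes it below -/
import Mathlib

section
/- Let B : {1, …, k} → 2^Q be injective and let q₀ ∈ Q be such that the singleton {q₀} is not in the range of B. Define B' : {1, …, k+1} → 2^Q by B'(i) = B(i) for i ∈ {1, …, k} and B'(k+1) = {q₀}. Then |T(n, k, B)| ≤ |T(n, k+1, B')|. -/
/-!
Common definitions. `Q` is a finite set, `I = {1,…,k}` and `B : I → 2^Q`
(modelled as `B : ℕ → Set Q` used on indices in `{1,…,k}`). For a finite
sequence `α` over `I` (a `List ℕ`): `U(α) = ∪_{i} B(α[i])`,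
`Cover(α) = { j ∈ I : B(j) ⊆ U(α) }`, and `Mini(α)` is the set of minimal
(and least-index among ties) extensions. A Mini-increasing sequence is a
nonempty `α` with `α[i] ∈ Mini(α[1..i−1])` for all positions `i`; these are
exactly the non-root nodes of the increasing tree of sets `T(n,k,B)`.
-/

section
variable {Q : Type}

/-- `U(α) = ∪_{i=1}^{|α|} B(α[i])`. -/
def UB (B : ℕ → Set Q) (α : List ℕ) : Set Q := {q | ∃ j ∈ α, q ∈ B j}

/-- `Cover(α) = { j ∈ I : B(j) ⊆ U(α) }` where `I = {1,…,k}`. -/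
def Cover (B : ℕ → Set Q) (k : ℕ) (α : List ℕ) : Set ℕ :=
  {j | 1 ≤ j ∧ j ≤ k ∧ B j ⊆ UB B α}

/-- `Mini(α)`: the `j ∈ I \ Cover(α)` minimally (and with least index among
ties) extending `U(α)`. -/
def Mini (B : ℕ → Set Q) (k : ℕ) (α : List ℕ) : Set ℕ :=
  {j | (1 ≤ j ∧ j ≤ k ∧ j ∉ Cover B k α) ∧
    ∀ j', 1 ≤ j' → j' ≤ k → j' ∉ Cover B k α →
      (j' ≠ j → ¬ (B j' ∪ UB B α ⊂ B j ∪ UB B α)) ∧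
      (j' < j → B j' ∪ UB B α ≠ B j ∪ UB B α)}

/-- A Mini-increasing sequence: nonempty, and each entry belongs to `Mini` of
the preceding prefix (0-indexed). -/
def MiniIncreasing (B : ℕ → Set Q) (k : ℕ) (α : List ℕ) : Prop :=
  α ≠ [] ∧ ∀ i j, α[i]? = some j → j ∈ Mini B k (α.take i)

end

/-!
Adding the index `k + 1` with `B' (k + 1) = {q₀}` gives an injection `T(n, k, B) → T(n, k+1, B')`:
in a Mini-increasing sequence for `B`, insert `k + 1` just before the first entry `j` whose set
contains `q₀`, unless `B j` adds nothing but `q₀` to what is already covered. The entries before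
that point do not cover `q₀`, so `{q₀}` never undercuts them; at that point `{q₀}` is a minimal
extension since `B j` is; and once `q₀` is covered the new index never competes. Erasing `k + 1`
inverts the insertion.
-/

namespace List

lemma finite_setOf_length_le_forall_mem {α : Type*} {s : Set α} (hs : s.Finite) (n : ℕ) :
    {l : List α | l.length ≤ n ∧ ∀ x ∈ l, x ∈ s}.Finite := by
  have := hs.to_subtype
  refine ((List.finite_length_le s n).image (List.map Subtype.val)).subset ?_
  rintro l ⟨hl, hmem⟩
  exact ⟨l.attachWith _ hmem, by simpa using hl, by simp⟩

end List

section MiniIncreasing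

variable {Q : Type} {B B' : ℕ → Set Q} {k j : ℕ} {U V : Set Q} {q₀ : Q}

/-- `Mini` as a function of the covered set `U = U_B(α)` alone. -/
def MiniOver (B : ℕ → Set Q) (k : ℕ) (U : Set Q) : Set ℕ :=
  {j | (1 ≤ j ∧ j ≤ k ∧ ¬ B j ⊆ U) ∧
    ∀ j', 1 ≤ j' → j' ≤ k → ¬ B j' ⊆ U →
      (j' ≠ j → ¬ B j' ∪ U ⊂ B j ∪ U) ∧
      (j' < j → B j' ∪ U ≠ B j ∪ U)}

/-- `MiniChain B k U α`: `α` is Mini-increasing when the points of `U` count as already covered. -/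
def MiniChain (B : ℕ → Set Q) (k : ℕ) : Set Q → List ℕ → Prop
  | _, [] => True
  | U, j :: t => j ∈ MiniOver B k U ∧ MiniChain B k (U ∪ B j) t

@[simp]
lemma UB_nil (B : ℕ → Set Q) : UB B [] = ∅ := by
  simp [UB]

@[simp]
lemma UB_cons (B : ℕ → Set Q) (j : ℕ) (t : List ℕ) : UB B (j :: t) = B j ∪ UB B t := by
  ext q
  simp [UB, or_and_right, exists_or]

lemma mini_eq_miniOver (B : ℕ → Set Q) (k : ℕ) (α : List ℕ) :
    Mini B k α = MiniOver B k (UB B α) := by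
  ext j
  simp +contextual [Mini, MiniOver, Cover]

lemma miniChain_iff_forall_getElem? :
    ∀ {U : Set Q} {α : List ℕ}, MiniChain B k U α ↔
      ∀ i j, α[i]? = some j → j ∈ MiniOver B k (U ∪ UB B (α.take i))
  | U, [] => by simp [MiniChain]
  | U, a :: t => by
    simp only [MiniChain, miniChain_iff_forall_getElem?]
    constructor
    · rintro ⟨ha, ht⟩ (_ | i) j hj
      · simp_all
      · simpa [Set.union_assoc] using ht i j (by simpa using hj)
    · intro h
      refine ⟨by simpa using h 0 a rfl, fun i j hj => ?_⟩
      simpa [Set.union_assoc] using h (i + 1) j (by simpa using hj)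

lemma miniIncreasing_iff_miniChain {α : List ℕ} :
    MiniIncreasing B k α ↔ α ≠ [] ∧ MiniChain B k ∅ α := by
  simp [MiniIncreasing, miniChain_iff_forall_getElem?, mini_eq_miniOver]

lemma MiniChain.le_of_mem : ∀ {U : Set Q} {t : List ℕ}, MiniChain B k U t → j ∈ t → j ≤ k
  | _, a :: _, ⟨ha, ht⟩, hj => by
    rcases List.mem_cons.1 hj with rfl | hj
    exacts [ha.1.2.1, ht.le_of_mem hj]

/-- Each entry covers a new point. -/
lemma MiniChain.length_add_ncard_le [Finite Q] :
    ∀ {U : Set Q} {t : List ℕ}, MiniChain B k U t → t.length + U.ncard ≤ Nat.card Q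
  | U, [], _ => by simpa using Set.ncard_le_card U
  | U, a :: t, ⟨ha, ht⟩ => by
    obtain ⟨x, hxB, hxU⟩ := Set.not_subset.1 ha.1.2.2
    have hgrow : U.ncard + 1 ≤ (U ∪ B a).ncard := by
      rw [← Set.ncard_insert_of_notMem hxU]
      exact Set.ncard_le_ncard (Set.insert_subset (Or.inr hxB) Set.subset_union_left)
    have := ht.length_add_ncard_le
    simp only [List.length_cons]
    omega

lemma finite_setOf_miniIncreasing [Finite Q] (B : ℕ → Set Q) (k : ℕ) :
    {α : List ℕ | MiniIncreasing B k α}.Finite := by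
  refine (List.finite_setOf_length_le_forall_mem (Set.finite_Iic k) (Nat.card Q)).subset ?_
  intro α hα
  obtain ⟨-, hchain⟩ := miniIncreasing_iff_miniChain.1 hα
  exact ⟨by simpa using hchain.length_add_ncard_le, fun j hj => hchain.le_of_mem hj⟩

lemma mem_miniOver_of_subset (hj : j ∈ MiniOver B k U) (hUV : U ⊆ V) (hV : V ⊆ B j ∪ U)
    (hjV : ¬ B j ⊆ V) : j ∈ MiniOver B k V := by
  obtain ⟨⟨h1, h2, -⟩, hmin⟩ := hj
  have hjVU : B j ∪ V = B j ∪ U :=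
    Set.Subset.antisymm (Set.union_subset Set.subset_union_left hV)
      (Set.union_subset_union_right _ hUV)
  refine ⟨⟨h1, h2, hjV⟩, fun j' h1' h2' hj'V => ?_⟩
  have hj'U : ¬ B j' ⊆ U := fun h => hj'V (h.trans hUV)
  have heq_of_subset (hne : j' ≠ j) (hsub : B j' ∪ V ⊆ B j ∪ V) : B j' ∪ V = B j ∪ V := by
    have hU : B j' ∪ U ⊆ B j ∪ U :=
      (Set.union_subset_union_right _ hUV).trans (hjVU ▸ hsub)
    have hU : B j' ∪ U = B j ∪ U :=
      hU.eq_or_ssubset.resolve_right ((hmin j' h1' h2' hj'U).1 hne)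
    rw [← Set.union_eq_right.2 hUV, ← Set.union_assoc, hU, Set.union_assoc]
  refine ⟨fun hne hss => hss.ne (heq_of_subset hne hss.subset), fun hlt heq => ?_⟩
  have hsub : B j' ∪ U ⊆ B j ∪ U :=
    (Set.union_subset_union_right _ hUV).trans (hjVU ▸ heq.subset)
  exact (hmin j' h1' h2' hj'U).2 hlt
    (hsub.eq_or_ssubset.resolve_right ((hmin j' h1' h2' hj'U).1 hlt.ne))

lemma mem_miniOver_succ (hext : ∀ j, 1 ≤ j → j ≤ k → B' j = B j) (hj : j ∈ MiniOver B k U)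
    (hnew : B' (k + 1) ⊆ U ∨ ¬ B' (k + 1) ∪ U ⊂ B j ∪ U) : j ∈ MiniOver B' (k + 1) U := by
  obtain ⟨⟨h1, h2, hjU⟩, hmin⟩ := hj
  simp only [MiniOver, Set.mem_ofPred_eq, hext j h1 h2]
  refine ⟨⟨h1, by omega, hjU⟩, fun j' h1' h2' hj'U => ?_⟩
  obtain h2' | rfl := Nat.le_succ_iff.1 h2'
  · rw [hext j' h1' h2'] at hj'U ⊢
    exact hmin j' h1' h2' hj'U
  · exact ⟨fun _ => hnew.resolve_left hj'U, fun h => absurd h (by omega)⟩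

lemma succ_mem_miniOver (hext : ∀ j, 1 ≤ j → j ≤ k → B' j = B j) (hnew : B' (k + 1) = {q₀})
    (hq₀ : q₀ ∉ U) (hj : j ∈ MiniOver B k U) (hss : insert q₀ U ⊂ B j ∪ U) :
    k + 1 ∈ MiniOver B' (k + 1) U := by
  obtain ⟨-, hmin⟩ := hj
  have hnot_subset (j' : ℕ) (h1' : 1 ≤ j') (h2' : j' ≤ k) (hj'U : ¬ B j' ⊆ U) :
      ¬ B j' ∪ U ⊆ insert q₀ U := by
    intro hsub
    obtain ⟨x, hxB, hxU⟩ := Set.not_subset.1 hj'U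
    have hx : x = q₀ := (Set.mem_insert_iff.1 (hsub (Or.inl hxB))).resolve_right hxU
    have heq : B j' ∪ U = insert q₀ U :=
      hsub.antisymm (Set.insert_subset (Or.inl (hx ▸ hxB)) Set.subset_union_right)
    have hne : j' ≠ j := by
      rintro rfl
      exact hss.ne heq.symm
    exact (hmin j' h1' h2' hj'U).1 hne (heq ▸ hss)
  simp only [MiniOver, Set.mem_ofPred_eq, hnew, Set.singleton_union, Set.singleton_subset_iff]
  refine ⟨⟨by omega, le_rfl, hq₀⟩, fun j' h1' h2' hj'U => ⟨fun hne hss' => ?_, fun hlt heq => ?_⟩⟩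
  · rw [hext j' h1' (by omega)] at hj'U hss'
    exact hnot_subset j' h1' (by omega) hj'U hss'.subset
  · rw [hext j' h1' (by omega)] at hj'U heq
    exact hnot_subset j' h1' (by omega) hj'U heq.subset

lemma MiniChain.succ_of_subset (hext : ∀ j, 1 ≤ j → j ≤ k → B' j = B j) :
    ∀ {U : Set Q} {t : List ℕ}, B' (k + 1) ⊆ U → MiniChain B k U t → MiniChain B' (k + 1) U t
  | _, [], _, _ => trivial
  | _, a :: _, hU, ⟨ha, ht⟩ => by
    refine ⟨mem_miniOver_succ hext ha (Or.inl hU), ?_⟩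
    rw [hext a ha.1.1 ha.1.2.1]
    exact ht.succ_of_subset hext (hU.trans Set.subset_union_left)

open Classical in
noncomputable def insertNew (B : ℕ → Set Q) (q₀ : Q) (k : ℕ) : Set Q → List ℕ → List ℕ
  | _, [] => []
  | U, j :: t =>
    if q₀ ∈ B j then
      if B j ∪ U = insert q₀ U then j :: t else (k + 1) :: j :: t
    else j :: insertNew B q₀ k (U ∪ B j) t

lemma insertNew_ne_nil {t : List ℕ} (ht : t ≠ []) : insertNew B q₀ k U t ≠ [] := by
  obtain ⟨a, t, rfl⟩ := List.exists_cons_of_ne_nil ht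
  simp only [insertNew]
  split_ifs <;> simp

lemma erase_insertNew : ∀ {U : Set Q} {t : List ℕ}, k + 1 ∉ t →
    (insertNew B q₀ k U t).erase (k + 1) = t
  | _, [], _ => by simp [insertNew]
  | _, a :: t, h => by
    rw [List.mem_cons, not_or] at h
    simp only [insertNew]
    split_ifs
    · exact List.erase_of_not_mem (by simpa using h)
    · exact List.erase_cons_head _ _
    · rw [List.erase_cons_tail (by simpa using Ne.symm h.1), erase_insertNew h.2]

lemma MiniChain.insertNew (hext : ∀ j, 1 ≤ j → j ≤ k → B' j = B j) (hnew : B' (k + 1) = {q₀}) :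
    ∀ {U : Set Q} {t : List ℕ}, q₀ ∉ U → MiniChain B k U t →
      MiniChain B' (k + 1) U (insertNew B q₀ k U t)
  | _, [], _, _ => trivial
  | U, a :: t, hq₀, ⟨ha, ht⟩ => by
    have hBa : B' a = B a := hext a ha.1.1 ha.1.2.1
    simp only [_root_.insertNew]
    split_ifs with hmem heq
    · refine ⟨mem_miniOver_succ hext ha (Or.inr ?_), ?_⟩
      · rw [hnew, Set.singleton_union, heq]
        exact ssubset_irrefl _
      · rw [hBa]
        exact ht.succ_of_subset hext (by simp [hnew, hmem])
    · have hsub : insert q₀ U ⊆ B a ∪ U := Set.insert_subset (Or.inl hmem) Set.subset_union_right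
      have hss : insert q₀ U ⊂ B a ∪ U := hsub.ssubset_of_ne fun h => heq h.symm
      have hhead : a ∈ MiniOver B k (insert q₀ U) :=
        mem_miniOver_of_subset ha (Set.subset_insert _ _) hsub fun h =>
          hss.not_subset (Set.union_subset h (Set.subset_insert _ _))
      have hU : insert q₀ U ∪ B a = U ∪ B a := by
        rw [Set.insert_union, Set.insert_eq_of_mem (show q₀ ∈ U ∪ B a from Or.inr hmem)]
      refine ⟨succ_mem_miniOver hext hnew hq₀ ha hss, ?_, ?_⟩
      · rw [hnew, Set.union_singleton]
        exact mem_miniOver_succ hext hhead (Or.inl (by simp [hnew]))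
      · rw [hnew, Set.union_singleton, hBa, hU]
        exact ht.succ_of_subset hext (by simp [hnew, hmem])
    · refine ⟨mem_miniOver_succ hext ha (Or.inr fun h => ?_), ?_⟩
      · rcases h.subset (by simp [hnew] : q₀ ∈ B' (k + 1) ∪ U) with h | h
        exacts [hmem h, hq₀ h]
      · rw [hBa]
        exact ht.insertNew hext hnew (by simp [hq₀, hmem])

end MiniIncreasing

theorem miniIncreasing_count_add_singleton_general
    {Q : Type} [Fintype Q] (k : ℕ) (B B' : ℕ → Set Q) (q₀ : Q)
    (hext : ∀ j, 1 ≤ j → j ≤ k → B' j = B j)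
    (hnew : B' (k + 1) = {q₀}) :
    {α : List ℕ | MiniIncreasing B k α}.ncard
      ≤ {α : List ℕ | MiniIncreasing B' (k + 1) α}.ncard := by
  refine Set.ncard_le_ncard_of_injOn (insertNew B q₀ k ∅) (fun α hα => ?_) ?_
    (finite_setOf_miniIncreasing B' (k + 1))
  · obtain ⟨hne, hchain⟩ := miniIncreasing_iff_miniChain.1 hα
    exact miniIncreasing_iff_miniChain.2
      ⟨insertNew_ne_nil hne, hchain.insertNew hext hnew (Set.notMem_empty q₀)⟩
  · refine Set.LeftInvOn.injOn (f₁' := fun l => l.erase (k + 1)) fun α hα => erase_insertNew ?_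
    obtain ⟨-, hchain⟩ := miniIncreasing_iff_miniChain.1 hα
    exact fun h => by simpa using hchain.le_of_mem h

theorem miniIncreasing_count_add_singleton
    {Q : Type} [Fintype Q] (n k : ℕ) (hn : 1 ≤ n) (hk : 1 ≤ k)
    (hcard : Fintype.card Q = n) (B B' : ℕ → Set Q) (q₀ : Q)
    (hinjB : Set.InjOn B (Set.Icc 1 k))
    (hq₀ : ∀ j, 1 ≤ j → j ≤ k → B j ≠ {q₀})
    (hext : ∀ j, 1 ≤ j → j ≤ k → B' j = B j)
    (hnew : B' (k + 1) = {q₀}) :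
    {α : List ℕ | MiniIncreasing B k α}.ncard
      ≤ {α : List ℕ | MiniIncreasing B' (k + 1) α}.ncard :=
  miniIncreasing_count_add_singleton_general k B B' q₀ hext hnew
end

section
/- Suppose n ≥ 2 and B : I → 2^Q is injective. Then |T(n, k, B)| ≤ 3 · n!. -/
/-!
For a prefix `α`, let `m` be the number of points not covered by `U(α)`. The admissible next
letters `j ∈ Mini(α)` contribute the sets `B j \ U(α)` of new points; minimality and the
tie-breaking rule make these nonempty, pairwise distinct and an antichain among the subsets of
the `m` uncovered points. Induction on `m` bounds the number of continuations of `α` by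
`treeBound m` (`1` for `m = 0`, else `3 * m! - 1`): the LYM inequality gives
`∑ (m - |C|)! ≤ m!` over the antichain, which closes the recursion
`1 + ∑ treeBound (m - |C|) ≤ treeBound m` once there are two children; a single child is
handled by the monotonicity of `treeBound`.
-/

open Finset

def treeBound : ℕ → ℕ
  | 0 => 1
  | m + 1 => 3 * (m + 1).factorial - 1

lemma treeBound_of_ne_zero {m : ℕ} (hm : m ≠ 0) : treeBound m = 3 * m.factorial - 1 := by
  obtain ⟨m, rfl⟩ := Nat.exists_eq_succ_of_ne_zero hm
  rfl

lemma treeBound_add_one_le (m : ℕ) : treeBound m + 1 ≤ 3 * m.factorial := by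
  cases m with
  | zero => simp [treeBound]
  | succ m =>
    have := Nat.factorial_pos (m + 1)
    rw [treeBound_of_ne_zero m.add_one_ne_zero]
    omega

lemma treeBound_strictMono : StrictMono treeBound := by
  refine strictMono_nat_of_lt_succ fun m => ?_
  cases m with
  | zero => simp [treeBound]
  | succ m =>
    have : (m + 1).factorial < (m + 1 + 1).factorial := (Nat.factorial_lt m.succ_pos).2 (by omega)
    rw [treeBound_of_ne_zero m.add_one_ne_zero, treeBound_of_ne_zero (m + 1).add_one_ne_zero]
    omega

lemma one_le_treeBound (m : ℕ) : 1 ≤ treeBound m :=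
  treeBound_strictMono.monotone (Nat.zero_le m)

lemma sum_factorial_card_compl_le {α : Type*} [Fintype α] {𝒜 : Finset (Finset α)}
    (h𝒜 : IsAntichain (· ⊆ ·) (𝒜 : Set (Finset α))) :
    ∑ s ∈ 𝒜, (Fintype.card α - #s).factorial ≤ (Fintype.card α).factorial := by
  set m := Fintype.card α
  have hterm : ∀ s ∈ 𝒜, ((m - #s).factorial : ℚ) ≤ m.factorial * ((m.choose #s : ℚ))⁻¹ := by
    intro s _
    have hc : #s ≤ m := card_le_univ s
    rw [le_mul_inv_iff₀ (by exact_mod_cast Nat.choose_pos hc)]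
    have : (m - #s).factorial * m.choose #s ≤ m.factorial :=
      calc (m - #s).factorial * m.choose #s
          ≤ m.choose #s * (#s).factorial * (m - #s).factorial := by
            rw [mul_comm, mul_assoc]
            exact Nat.mul_le_mul_left _ (Nat.le_mul_of_pos_left _ (Nat.factorial_pos _))
        _ = m.factorial := Nat.choose_mul_factorial_mul_factorial hc
    exact_mod_cast this
  have hsum : (∑ s ∈ 𝒜, (m - #s).factorial : ℚ) ≤ m.factorial :=
    calc (∑ s ∈ 𝒜, (m - #s).factorial : ℚ) ≤ ∑ s ∈ 𝒜, m.factorial * ((m.choose #s : ℚ))⁻¹ :=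
          sum_le_sum hterm
      _ = m.factorial * ∑ s ∈ 𝒜, ((m.choose #s : ℚ))⁻¹ := (mul_sum ..).symm
      _ ≤ m.factorial * 1 := by
          gcongr; exact lubell_yamamoto_meshalkin_inequality_sum_inv_choose h𝒜
      _ = m.factorial := mul_one _
  exact_mod_cast hsum

theorem one_add_sum_treeBound_le {α : Type*} [Fintype α] {𝒜 : Finset (Finset α)}
    (h𝒜 : IsAntichain (· ⊆ ·) (𝒜 : Set (Finset α))) (hempty : ∅ ∉ 𝒜) :
    1 + ∑ s ∈ 𝒜, treeBound (Fintype.card α - #s) ≤ treeBound (Fintype.card α) := by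
  set m := Fintype.card α
  rcases 𝒜.eq_empty_or_nonempty with rfl | ⟨s, hs⟩
  · simp [one_le_treeBound]
  have hs0 : 0 < #s := card_pos.2 (nonempty_iff_ne_empty.2 fun h => hempty (h ▸ hs))
  have hsm : #s ≤ m := card_le_univ s
  obtain h1 | h2 := (one_le_card.2 ⟨s, hs⟩).eq_or_lt
  · obtain ⟨t, rfl⟩ := card_eq_one.1 h1.symm
    obtain rfl := mem_singleton.1 hs
    have := treeBound_strictMono (show m - #s < m by omega)
    rw [sum_singleton]
    omega
  · have hbound : ∑ s ∈ 𝒜, (treeBound (m - #s) + 1) ≤ 3 * m.factorial :=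
      calc ∑ s ∈ 𝒜, (treeBound (m - #s) + 1) ≤ ∑ s ∈ 𝒜, 3 * (m - #s).factorial :=
            sum_le_sum fun s _ => treeBound_add_one_le _
        _ = 3 * ∑ s ∈ 𝒜, (m - #s).factorial := (mul_sum ..).symm
        _ ≤ 3 * m.factorial := by gcongr; exact sum_factorial_card_compl_le h𝒜
    rw [sum_add_distrib, sum_const, smul_eq_mul, mul_one] at hbound
    rw [treeBound_of_ne_zero (by omega)]
    omega

section Tree

variable {Q : Type} (B : ℕ → Set Q) (k : ℕ)

def extensions (α : List ℕ) : Set (List ℕ) :=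
  {β | ∀ i j, β[i]? = some j → j ∈ Mini B k (α ++ β.take i)}

variable {B k}

lemma mem_extensions_nil_of_miniIncreasing {α : List ℕ} (h : MiniIncreasing B k α) :
    α ∈ extensions B k [] :=
  h.2

lemma extensions_subset (α : List ℕ) :
    extensions B k α ⊆ insert [] (⋃ j ∈ Mini B k α, List.cons j '' extensions B k (α ++ [j])) := by
  rintro (_ | ⟨j, β⟩) hβ
  · exact Set.mem_insert _ _
  · refine Set.mem_insert_of_mem _ (Set.mem_biUnion (by simpa using hβ 0 j rfl) ⟨β, ?_, rfl⟩)
    intro i j' hi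
    simpa using hβ (i + 1) j' hi

lemma UB_append_singleton (α : List ℕ) (j : ℕ) : UB B (α ++ [j]) = UB B α ∪ B j := by
  ext q
  simp [UB, or_and_right, exists_or]

lemma not_subset_UB_of_mem_Mini {α : List ℕ} {j : ℕ} (hj : j ∈ Mini B k α) :
    ¬ B j ⊆ UB B α :=
  fun h => hj.1.2.2 ⟨hj.1.1, hj.1.2.1, h⟩

lemma eq_of_mem_Mini_of_union_subset {α : List ℕ} {j j' : ℕ} (hj : j ∈ Mini B k α)
    (hj' : j' ∈ Mini B k α) (h : B j ∪ UB B α ⊆ B j' ∪ UB B α) : j = j' := by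
  by_contra hne
  obtain heq | hlt := h.eq_or_ssubset
  · rcases lt_or_gt_of_ne hne with hlt | hlt
    · exact (hj'.2 j hj.1.1 hj.1.2.1 hj.1.2.2).2 hlt heq
    · exact (hj.2 j' hj'.1.1 hj'.1.2.1 hj'.1.2.2).2 hlt heq.symm
  · exact (hj'.2 j hj.1.1 hj.1.2.1 hj.1.2.2).1 hne hlt

variable (B) [Finite Q]

noncomputable def newPoints (α : List ℕ) (j : ℕ) : Finset ↥(UB B α)ᶜ :=
  (Set.toFinite {x : ↥(UB B α)ᶜ | ↑x ∈ B j}).toFinset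

variable {B}

lemma mem_newPoints {α : List ℕ} {j : ℕ} {x : ↥(UB B α)ᶜ} : x ∈ newPoints B α j ↔ ↑x ∈ B j :=
  Set.Finite.mem_toFinset _

lemma newPoints_subset_newPoints_iff {α : List ℕ} {j j' : ℕ} :
    newPoints B α j ⊆ newPoints B α j' ↔ B j ∪ UB B α ⊆ B j' ∪ UB B α := by
  constructor
  · rintro h x (hx | hx)
    · by_cases hU : x ∈ UB B α
      · exact Or.inr hU
      · exact Or.inl (mem_newPoints.1 (h ((mem_newPoints (x := ⟨x, hU⟩)).2 hx)))
    · exact Or.inr hx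
  · intro h x hx
    obtain hx' | hx' := h (Or.inl (mem_newPoints.1 hx))
    · exact mem_newPoints.2 hx'
    · exact absurd hx' x.2

lemma newPoints_nonempty {α : List ℕ} {j : ℕ} (hj : j ∈ Mini B k α) :
    (newPoints B α j).Nonempty := by
  obtain ⟨x, hxB, hxU⟩ := Set.not_subset.1 (not_subset_UB_of_mem_Mini hj)
  exact ⟨⟨x, hxU⟩, mem_newPoints.2 hxB⟩

lemma ncard_compl_UB_append_add_card_newPoints (α : List ℕ) (j : ℕ) :
    (UB B (α ++ [j]))ᶜ.ncard + #(newPoints B α j) = (UB B α)ᶜ.ncard := by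
  rw [newPoints, ← Set.ncard_eq_toFinset_card, Set.ncard_subtype, UB_append_singleton,
    Set.compl_union, ← Set.sdiff_eq, add_comm, Set.inter_comm]
  exact Set.ncard_inter_add_ncard_sdiff_eq_ncard (UB B α)ᶜ (B j)

theorem encard_extensions_le (α : List ℕ) :
    (extensions B k α).encard ≤ treeBound (UB B α)ᶜ.ncard := by
  classical
  have hfin : (Mini B k α).Finite := (Set.finite_Icc 1 k).subset fun j hj => ⟨hj.1.1, hj.1.2.1⟩
  set S := hfin.toFinset
  let _ : Fintype ↥(UB B α)ᶜ := Fintype.ofFinite _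
  have hinj : Set.InjOn (newPoints B α) S := fun j hj j' hj' h =>
    eq_of_mem_Mini_of_union_subset (hfin.mem_toFinset.1 hj) (hfin.mem_toFinset.1 hj')
      (newPoints_subset_newPoints_iff.1 h.le)
  have hanti : IsAntichain (· ⊆ ·) (S.image (newPoints B α) : Set (Finset ↥(UB B α)ᶜ)) := by
    rw [coe_image]
    rintro _ ⟨j, hj, rfl⟩ _ ⟨j', hj', rfl⟩ hne hsub
    exact hne (congrArg _ (eq_of_mem_Mini_of_union_subset (hfin.mem_toFinset.1 hj)
      (hfin.mem_toFinset.1 hj') (newPoints_subset_newPoints_iff.1 hsub)))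
  have hempty : ∅ ∉ S.image (newPoints B α) := by
    rw [mem_image]
    rintro ⟨j, hj, h⟩
    exact (newPoints_nonempty (hfin.mem_toFinset.1 hj)).ne_empty h
  have hcard : Fintype.card ↥(UB B α)ᶜ = (UB B α)ᶜ.ncard := by
    rw [← Nat.card_eq_fintype_card, Nat.card_coe_set_eq]
  have hchild : ∀ j,
      (UB B (α ++ [j]))ᶜ.ncard = Fintype.card ↥(UB B α)ᶜ - #(newPoints B α j) := by
    intro j
    have := ncard_compl_UB_append_add_card_newPoints (B := B) α j
    omega
  calc (extensions B k α).encard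
      ≤ (insert [] (⋃ j ∈ S, List.cons j '' extensions B k (α ++ [j]))).encard :=
        Set.encard_le_encard (by simpa [S] using extensions_subset α)
    _ ≤ ∑ j ∈ S, (extensions B k (α ++ [j])).encard + 1 := by
        refine (Set.encard_insert_le _ _).trans (add_le_add_left ?_ 1)
        exact (set_encard_biUnion_le S _).trans (sum_le_sum fun j _ => Set.encard_image_le _ _)
    _ ≤ ∑ j ∈ S, (treeBound (UB B (α ++ [j]))ᶜ.ncard : ℕ∞) + 1 := by
        gcongr with j hj
        exact encard_extensions_le (α ++ [j])
    _ = ((1 + ∑ s ∈ S.image (newPoints B α),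
          treeBound (Fintype.card ↥(UB B α)ᶜ - #s) : ℕ) : ℕ∞) := by
        rw [sum_image hinj]
        simp only [hchild]
        push_cast
        rw [add_comm]
    _ ≤ treeBound (Fintype.card ↥(UB B α)ᶜ) := by
        exact_mod_cast one_add_sum_treeBound_le hanti hempty
    _ = treeBound (UB B α)ᶜ.ncard := by rw [hcard]
termination_by (UB B α)ᶜ.ncard
decreasing_by
  have := ncard_compl_UB_append_add_card_newPoints (B := B) α j
  have := (newPoints_nonempty (hfin.mem_toFinset.1 hj)).card_pos
  omega

end Tree

theorem miniIncreasing_count_injective_general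
    {Q : Type} [Fintype Q] (n k : ℕ)
    (hcard : Fintype.card Q = n) (B : ℕ → Set Q) :
    {α : List ℕ | MiniIncreasing B k α}.ncard ≤ 3 * n.factorial := by
  have hUB : (UB B [])ᶜ.ncard = n := by
    simp [UB, ← hcard, Set.ncard_univ]
  have h := (Set.encard_le_encard fun _ => mem_extensions_nil_of_miniIncreasing).trans
    (encard_extensions_le (B := B) (k := k) [])
  rw [hUB] at h
  exact ((Set.encard_le_coe_iff_finite_ncard_le.1 h).2).trans
    ((Nat.le_succ _).trans (treeBound_add_one_le n))

theorem miniIncreasing_count_injective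
    {Q : Type} [Fintype Q] (n k : ℕ) (hn : 2 ≤ n) (hk : 1 ≤ k)
    (hcard : Fintype.card Q = n) (B : ℕ → Set Q)
    (hinjB : Set.InjOn B (Set.Icc 1 k)) :
    {α : List ℕ | MiniIncreasing B k α}.ncard ≤ 3 * n.factorial :=
  miniIncreasing_count_injective_general n k hcard B
end
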